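/- Let (Ш, →, ↠, ↪) be a two-acyclic factorization system. Then: (1) the completely join-irreducible elements of Pairs(→) are exactly the pairs (T(x), T(x)^⊥) for x ∈ Ш, and the unique element covered by (T(x), T(x)^⊥) is (T_*(x), T_*(x)^⊥); (2) the completely meet-irreducible elements of Pairs(→) are exactly the pairs (^⊥F(x), F(x)) for x ∈ Ш, and the unique element covering (^⊥F(x), F(x)) is (^⊥F^*(x), F^*(x)). -/

import Mathlib

namespace SDL

variable {S : Type*} {L : Type*}

/-- `X^⊥ = {y | x ↛ y for all x ∈ X}` -/
def perpR (r : S → S → Prop) (X : Set S) : Set S := {y | ∀ x ∈ X, ¬ r x y}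

/-- `^⊥Y = {x | x ↛ y for all y ∈ Y}` -/
def perpL (r : S → S → Prop) (Y : Set S) : Set S := {x | ∀ y ∈ Y, ¬ r x y}

/-- `(X, Y)` is a maximal orthogonal pair for `r`. -/
def IsMOP (r : S → S → Prop) (X Y : Set S) : Prop := Y = perpR r X ∧ X = perpL r Y

/-- The set of maximal orthogonal pairs. -/
def Pairs (r : S → S → Prop) : Type _ := {p : Set S × Set S // IsMOP r p.1 p.2}

/-- `Pairs r` is ordered by containment in the first component. -/
instance (r : S → S → Prop) : PartialOrder (Pairs r) where
  le p q := p.val.1 ⊆ q.val.1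
  le_refl _ := Set.Subset.rfl
  le_trans _ _ _ h h' := Set.Subset.trans h h'
  le_antisymm p q h h' := by
    apply Subtype.ext
    have h1 : p.val.1 = q.val.1 := subset_antisymm h h'
    have h2 : p.val.2 = q.val.2 := by rw [p.prop.1, q.prop.1, h1]
    exact Prod.ext h1 h2

/-- `x ↠ y` iff for all `z`, `y → z` implies `x → z`. -/
def Onto (r : S → S → Prop) (x y : S) : Prop := ∀ z, r y z → r x z

/-- `x ↪ y` iff for all `z`, `z → x` implies `z → y`. -/
def Into (r : S → S → Prop) (x y : S) : Prop := ∀ z, r z x → r z y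

/-- `Mult ↠ ↪` relates `x` to `z` iff `x ↠ y ↪ z` for some `y`. -/
def Mult (ont inj : S → S → Prop) (x z : S) : Prop := ∃ y, ont x y ∧ inj y z

/-- `(S, r, ont, inj)` is a factorization system. -/
structure IsFactSystem (r ont inj : S → S → Prop) : Prop where
  refl : ∀ x, r x x
  onto_iff : ∀ x y, ont x y ↔ Onto r x y
  into_iff : ∀ x y, inj x y ↔ Into r x y
  mult_iff : ∀ x z, r x z ↔ Mult ont inj x z

/-- A two-acyclic factorization system. -/
structure IsTwoAcyclicFS (r ont inj : S → S → Prop) extends IsFactSystem r ont inj : Prop where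
  onto_antisymm : ∀ x y, ont x y → ont y x → x = y
  into_antisymm : ∀ x y, inj x y → inj y x → x = y
  brick : ∀ x y, ont x y → inj y x → x = y

/-- `T(x) = {x' | x ↠ x'}`. -/
def Tset (ont : S → S → Prop) (x : S) : Set S := {x' | ont x x'}

/-- `F(x) = {x' | x' ↪ x}`. -/
def Fset (inj : S → S → Prop) (x : S) : Set S := {x' | inj x' x}

/-- Restriction of a relation to a subset. -/
def restrictRel (r : S → S → Prop) (D : Set S) : D → D → Prop := fun a b => r a b

/-- A subset is closed if it equals its closure `^⊥(X^⊥)`. -/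
def IsClosedSet (r : S → S → Prop) (X : Set S) : Prop := perpL r (perpR r X) = X

/-- The lattice of closed sets, ordered by containment. -/
abbrev Closeds (r : S → S → Prop) : Type _ := {X : Set S // IsClosedSet r X}

/-- `Del(X, c) = X \ {x ∈ X : x ↠ c}`. -/
def Del (ont : S → S → Prop) (X : Set S) (c : S) : Set S := X \ {x | ont x c}

/-- `Cov(X)`: those `c ∈ X` with `Del(X,c)` closed and the closure of `Del(X,c) ∪ {c}` equal
to `X`. -/
def CovS (r ont : S → S → Prop) (X : Set S) : Set S :=
  {c | c ∈ X ∧ IsClosedSet r (Del ont X c) ∧ perpL r (perpR r (Del ont X c ∪ {c})) = X}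

/-- Direct forcing: `x ⇝ y` iff `x` is `↠`-minimal in `F(y)` or `↪`-maximal in `T(y)`. -/
def Forces (ont inj : S → S → Prop) (x y : S) : Prop :=
  (inj x y ∧ ∀ x', inj x' y → ont x x' → x' = x) ∨
  (ont y x ∧ ∀ x', ont y x' → inj x' x → x' = x)

/-- `down X` for a partial order given as a relation (`r x y` meaning `x ≥ y`). -/
def dnRel (r : S → S → Prop) (X : Set S) : Set S := {y | ∃ x ∈ X, r x y}

/-- `up X` for a partial order given as a relation (`r x y` meaning `x ≥ y`). -/
def upRel (r : S → S → Prop) (X : Set S) : Set S := {y | ∃ x ∈ X, r y x}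

section OrderNotions

variable [PartialOrder L]

/-- Completely join-irreducible: there is `j⁎` such that `x < j ↔ x ≤ j⁎`. -/
def CJIrr (j : L) : Prop := ∃ j', ∀ x : L, x < j ↔ x ≤ j'

/-- Completely meet-irreducible: there is `j^*` such that `x > m ↔ x ≥ m^*`. -/
def CMIrr (m : L) : Prop := ∃ m', ∀ x : L, m < x ↔ m' ≤ x

/-- `k = κ(j)`: `k` is the greatest element of `{y | j ⊓ y = j⁎}`. -/
def IsKappa (j k : L) : Prop :=
  ∃ j', (∀ x : L, x < j ↔ x ≤ j') ∧ IsGreatest {y : L | IsGLB ({j, y} : Set L) j'} k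

/-- `k = κᵈ(m)`: `k` is the least element of `{x | m ⊔ x = m^*}`. -/
def IsKappad (m k : L) : Prop :=
  ∃ m', (∀ x : L, m < x ↔ m' ≤ x) ∧ IsLeast {x : L | IsLUB ({m, x} : Set L) m'} k

/-- `L` is a κ-lattice: complete, meet and join generated by irreducibles, with inverse
bijections `κ` and `κᵈ` between the completely join- and meet-irreducibles. -/
def IsKappaLattice (L : Type*) [PartialOrder L] : Prop :=
  (∀ s : Set L, ∃ a, IsLUB s a) ∧
  (∀ s : Set L, ∃ a, IsGLB s a) ∧
  (∀ x : L, IsLUB {j : L | CJIrr j ∧ j ≤ x} x) ∧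
  (∀ x : L, IsGLB {m : L | CMIrr m ∧ x ≤ m} x) ∧
  (∀ j : L, CJIrr j → ∃ k, IsKappa j k ∧ CMIrr k ∧ IsKappad k j) ∧
  (∀ m : L, CMIrr m → ∃ k, IsKappad m k ∧ CJIrr k ∧ IsKappa k m)

/-- Well separated: `z₁ ≰ z₂` implies some completely join-irreducible `j` has `j ≤ z₁` and
`κ(j) ≥ z₂`. -/
def WellSeparated (L : Type*) [PartialOrder L] : Prop :=
  ∀ z₁ z₂ : L, ¬ z₁ ≤ z₂ → ∃ j k : L, CJIrr j ∧ IsKappa j k ∧ j ≤ z₁ ∧ z₂ ≤ k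

/-- The set of completely join-irreducible elements, as a type. -/
abbrev JIrrC (L : Type*) [PartialOrder L] : Type _ := {j : L // CJIrr j}

/-- `i →_L j` iff `i ≰ κ(j)`. -/
def toL (i j : JIrrC L) : Prop := ∃ k : L, IsKappa (j : L) k ∧ ¬ (i : L) ≤ k

/-- `i ↠_L j` iff `i ≥ j` in `L`. -/
def ontoL (i j : JIrrC L) : Prop := (j : L) ≤ (i : L)

/-- `i ↪_L j` iff `κ(i) ≥ κ(j)` in `L`. -/
def intoL (i j : JIrrC L) : Prop :=
  ∃ ki kj : L, IsKappa (i : L) ki ∧ IsKappa (j : L) kj ∧ kj ≤ ki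

/-- A poset is a semidistributive lattice (order-theoretically): binary joins and meets exist,
and both semidistributive laws hold. -/
def IsSDLattice (L : Type*) [PartialOrder L] : Prop :=
  (∀ x y : L, ∃ s, IsLUB ({x, y} : Set L) s) ∧
  (∀ x y : L, ∃ s, IsGLB ({x, y} : Set L) s) ∧
  (∀ x y z sxy sxz myz : L, IsLUB ({x, y} : Set L) sxy → IsLUB ({x, z} : Set L) sxz →
    sxy = sxz → IsGLB ({y, z} : Set L) myz → IsLUB ({x, myz} : Set L) sxy) ∧
  (∀ x y z mxy mxz syz : L, IsGLB ({x, y} : Set L) mxy → IsGLB ({x, z} : Set L) mxz →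
    mxy = mxz → IsLUB ({y, z} : Set L) syz → IsGLB ({x, syz} : Set L) mxy)

/-- `s` is the canonical join representation of `x`. -/
def IsCanonicalJoinRep (s : Set L) (x : L) : Prop :=
  IsLUB s x ∧ (∀ s' : Set L, IsLUB s' x → ∀ a ∈ s, ∃ b ∈ s', a ≤ b) ∧
  IsAntichain (· ≤ ·) s

end OrderNotions

/-- Join semidistributivity. -/
def JoinSD (L : Type*) [Lattice L] : Prop :=
  ∀ x y z : L, x ⊔ y = x ⊔ z → x ⊔ (y ⊓ z) = x ⊔ y

/-- Meet semidistributivity. -/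
def MeetSD (L : Type*) [Lattice L] : Prop :=
  ∀ x y z : L, x ⊓ y = x ⊓ z → x ⊓ (y ⊔ z) = x ⊓ y

/-- Complete join semidistributivity. -/
def CompletelyJoinSD (L : Type*) [CompleteLattice L] : Prop :=
  ∀ (X : Set L) (y z : L), X.Nonempty → (∀ x ∈ X, x ⊔ y = z) → sInf X ⊔ y = z

/-- Complete meet semidistributivity. -/
def CompletelyMeetSD (L : Type*) [CompleteLattice L] : Prop :=
  ∀ (X : Set L) (y z : L), X.Nonempty → (∀ x ∈ X, x ⊓ y = z) → sSup X ⊓ y = z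

end SDL

namespace SDL

/-!
The first component of a maximal orthogonal pair is closed downwards under `↠`, so
`(T(x), T(x)^⊥)` is the least pair whose first component contains `x`. Two-acyclicity gives
`x ∈ T⁎(x)^⊥`: a factorization `x ↠ x' → x` forces `x' = x`. Hence `T⁎(x)` is closed too, and
the pairs strictly below `(T(x), T(x)^⊥)` are exactly those below `(T⁎(x), T⁎(x)^⊥)`.
Conversely, if `p` is completely join-irreducible with lower cover `p⁎`, then `p` is the pair
generated by any `x` in the first component of `p` but not of `p⁎`. The statement about `F` is
the one about `T` for the opposite relation, whose factorization is `(↪ᵒᵖ, ↠ᵒᵖ)` and whose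
lattice of pairs is the order dual of `Pairs(→)`.
-/

section OrderIrreducibles

variable {L M : Type*} [PartialOrder L] [PartialOrder M]

theorem covBy_of_forall_lt_iff_le {a b : L} (hab : ∀ x, x < b ↔ x ≤ a) : a ⋖ b :=
  ⟨(hab a).2 le_rfl, fun _ hac hcb => ((hab _).1 hcb).not_gt hac⟩

theorem _root_.OrderIso.cjirr_apply_iff (e : L ≃o M) {j : L} : CJIrr (e j) ↔ CJIrr j := by
  simp only [CJIrr, e.surjective.forall, e.surjective.exists, e.lt_iff_lt, e.le_iff_le]

theorem cmirr_iff_cjirr_toDual {m : L} : CMIrr m ↔ CJIrr (OrderDual.toDual m) := Iff.rfl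

end OrderIrreducibles

section Polarity

variable {S : Type*} {r : S → S → Prop}

theorem perpR_antitone : Antitone (perpR r) :=
  fun _ _ hXX' _ hy x hx => hy x (hXX' hx)

theorem perpL_antitone : Antitone (perpL r) :=
  fun _ _ hYY' _ hx y hy => hx y (hYY' hy)

theorem subset_perpL_perpR (X : Set S) : X ⊆ perpL r (perpR r X) :=
  fun x hx _ hy => hy x hx

namespace Pairs

theorem le_def {p q : Pairs r} : p ≤ q ↔ p.val.1 ⊆ q.val.1 := Iff.rfl

theorem ext_fst_iff {p q : Pairs r} : p = q ↔ p.val.1 = q.val.1 :=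
  ⟨fun h => h ▸ rfl, fun h => le_antisymm h.subset h.superset⟩

theorem le_iff_snd_subset {p q : Pairs r} : p ≤ q ↔ q.val.2 ⊆ p.val.2 := by
  rw [le_def]
  constructor
  · intro hpq
    rw [p.prop.1, q.prop.1]
    exact perpR_antitone hpq
  · intro hqp
    rw [p.prop.2, q.prop.2]
    exact perpL_antitone hqp

def ofClosed (X : Set S) (hX : IsClosedSet r X) : Pairs r :=
  ⟨(X, perpR r X), rfl, hX.symm⟩

theorem mem_fst_of_onto (p : Pairs r) {x y : S} (hx : x ∈ p.val.1) (hxy : Onto r x y) :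
    y ∈ p.val.1 := by
  rw [p.prop.2] at hx ⊢
  exact fun z hz hyz => hx z hz (hxy z hyz)

def dualFlip : (Pairs r)ᵒᵈ ≃o Pairs (flip r) where
  toFun p := ⟨(p.val.2, p.val.1), p.prop.2, p.prop.1⟩
  invFun p := ⟨(p.val.2, p.val.1), p.prop.2, p.prop.1⟩
  left_inv _ := rfl
  right_inv _ := rfl
  map_rel_iff' := le_iff_snd_subset.symm

end Pairs

theorem isClosedSet_setOf_onto (x : S) : IsClosedSet r {y | Onto r x y} := by
  refine Set.Subset.antisymm (fun w hw z hwz => ?_) (subset_perpL_perpR _)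
  by_contra hxz
  exact hw z (fun x' hxx' hx'z => hxz (hxx' z hx'z)) hwz

end Polarity

section FactorizationSystem

variable {S : Type*} {r ont inj : S → S → Prop}

namespace IsFactSystem

theorem onto_refl (h : IsFactSystem r ont inj) (x : S) : ont x x :=
  (h.onto_iff x x).2 fun _ => id

theorem onto_trans (h : IsFactSystem r ont inj) {x y z : S} (hxy : ont x y) (hyz : ont y z) :
    ont x z :=
  (h.onto_iff x z).2 fun w hzw => (h.onto_iff x y).1 hxy w ((h.onto_iff y z).1 hyz w hzw)

theorem isClosedSet_Tset (h : IsFactSystem r ont inj) (x : S) : IsClosedSet r (Tset ont x) := by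
  have hT : Tset ont x = {y | Onto r x y} := Set.ext fun y => h.onto_iff x y
  rw [hT]
  exact isClosedSet_setOf_onto x

def pairT (h : IsFactSystem r ont inj) (x : S) : Pairs r :=
  Pairs.ofClosed (Tset ont x) (h.isClosedSet_Tset x)

theorem pairT_le_iff (h : IsFactSystem r ont inj) {x : S} {p : Pairs r} :
    h.pairT x ≤ p ↔ x ∈ p.val.1 :=
  ⟨fun hle => hle (h.onto_refl x),
    fun hx _ hxy => p.mem_fst_of_onto hx ((h.onto_iff _ _).1 hxy)⟩

end IsFactSystem

namespace IsTwoAcyclicFS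

theorem dual (h : IsTwoAcyclicFS r ont inj) : IsTwoAcyclicFS (flip r) (flip inj) (flip ont) where
  refl := h.refl
  onto_iff x y := h.into_iff y x
  into_iff x y := h.onto_iff y x
  mult_iff x z := (h.mult_iff z x).trans
    ⟨fun ⟨y, hzy, hyx⟩ => ⟨y, hyx, hzy⟩, fun ⟨y, hyx, hzy⟩ => ⟨y, hzy, hyx⟩⟩
  onto_antisymm x y hyx hxy := h.into_antisymm x y hxy hyx
  into_antisymm x y hyx hxy := h.onto_antisymm x y hxy hyx
  brick x y hyx hxy := h.brick x y hxy hyx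

theorem eq_of_onto_of_rel (h : IsTwoAcyclicFS r ont inj) {x y : S} (hxy : ont x y)
    (hyx : r y x) : y = x := by
  obtain ⟨w, hyw, hwx⟩ := (h.mult_iff y x).1 hyx
  have hxw : x = w := h.brick x w (h.onto_trans hxy hyw) hwx
  exact h.onto_antisymm y x (hxw ▸ hyw) hxy

theorem isClosedSet_Tset_diff (h : IsTwoAcyclicFS r ont inj) (x : S) :
    IsClosedSet r (Tset ont x \ {x}) := by
  refine Set.Subset.antisymm (fun w hw => ⟨?_, ?_⟩) (subset_perpL_perpR _)
  · rw [← h.isClosedSet_Tset x]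
    exact perpL_antitone (perpR_antitone Set.sdiff_subset) hw
  · rintro rfl
    exact hw w (fun x' hx' hx'w => hx'.2 (h.eq_of_onto_of_rel hx'.1 hx'w)) (h.refl w)

def pairTStar (h : IsTwoAcyclicFS r ont inj) (x : S) : Pairs r :=
  Pairs.ofClosed (Tset ont x \ {x}) (h.isClosedSet_Tset_diff x)

theorem lt_pairT_iff (h : IsTwoAcyclicFS r ont inj) {x : S} {q : Pairs r} :
    q < h.pairT x ↔ q ≤ h.pairTStar x := by
  rw [lt_iff_le_not_ge, h.pairT_le_iff]
  show q.val.1 ⊆ Tset ont x ∧ x ∉ q.val.1 ↔ q.val.1 ⊆ Tset ont x \ {x}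
  rw [Set.subset_sdiff, Set.disjoint_singleton_right]

theorem cjirr_pairT (h : IsTwoAcyclicFS r ont inj) (x : S) : CJIrr (h.pairT x) :=
  ⟨h.pairTStar x, fun _ => h.lt_pairT_iff⟩

theorem cjirr_iff (h : IsTwoAcyclicFS r ont inj) {p : Pairs r} :
    CJIrr p ↔ ∃ x, p.val.1 = Tset ont x := by
  constructor
  · rintro ⟨p', hp'⟩
    have hlt : p' < p := (hp' p').2 le_rfl
    obtain ⟨x, hxp, hxp'⟩ := Set.not_subset.1 hlt.not_ge
    have hnlt : ¬ h.pairT x < p := fun hlt' => hxp' (h.pairT_le_iff.1 ((hp' _).1 hlt'))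
    exact ⟨x, Pairs.ext_fst_iff.1 ((h.pairT_le_iff.2 hxp).eq_of_not_lt hnlt).symm⟩
  · rintro ⟨x, hx⟩
    rw [show p = h.pairT x from Pairs.ext_fst_iff.2 hx]
    exact h.cjirr_pairT x

theorem covBy_iff (h : IsTwoAcyclicFS r ont inj) {x : S} {p q : Pairs r}
    (hp : p.val.1 = Tset ont x) : q ⋖ p ↔ q.val.1 = Tset ont x \ {x} := by
  have hcov : h.pairTStar x ⋖ h.pairT x := covBy_of_forall_lt_iff_le fun _ => h.lt_pairT_iff
  have hq_iff : q = h.pairTStar x ↔ q.val.1 = Tset ont x \ {x} := Pairs.ext_fst_iff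
  rw [show p = h.pairT x from Pairs.ext_fst_iff.2 hp, ← hq_iff]
  exact ⟨fun hq => (h.lt_pairT_iff.1 hq.lt).eq_of_not_lt fun hlt => hq.2 hlt hcov.lt,
    fun hq => hq ▸ hcov⟩

theorem cmirr_iff (h : IsTwoAcyclicFS r ont inj) {p : Pairs r} :
    CMIrr p ↔ ∃ x, p.val.2 = Fset inj x := by
  rw [cmirr_iff_cjirr_toDual, ← Pairs.dualFlip.cjirr_apply_iff]
  exact h.dual.cjirr_iff

theorem covBy_iff_of_snd (h : IsTwoAcyclicFS r ont inj) {x : S} {p q : Pairs r}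
    (hp : p.val.2 = Fset inj x) : p ⋖ q ↔ q.val.2 = Fset inj x \ {x} := by
  rw [← toDual_covBy_toDual_iff, ← apply_covBy_apply_iff Pairs.dualFlip]
  exact h.dual.covBy_iff hp

end IsTwoAcyclicFS

end FactorizationSystem

/-- Proposition 2.10: the completely join-irreducible elements of `Pairs(→)` are exactly the
pairs `(T(x), T(x)^⊥)`, the unique element covered by `(T(x), T(x)^⊥)` being
`(T⁎(x), T⁎(x)^⊥)`; dually, the completely meet-irreducible elements are exactly the pairs
`(^⊥F(x), F(x))`, the unique element covering `(^⊥F(x), F(x))` being `(^⊥F^*(x), F^*(x))`. -/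
theorem cji_cmi_of_pairs (S : Type u) (r ont inj : S → S → Prop)
    (h : IsTwoAcyclicFS r ont inj) :
    ((∀ x : S, ∃ p : Pairs r, p.val.1 = Tset ont x) ∧
     (∀ p : Pairs r, CJIrr p ↔ ∃ x : S, p.val.1 = Tset ont x) ∧
     (∀ (x : S) (p q : Pairs r), p.val.1 = Tset ont x →
        (q ⋖ p ↔ q.val.1 = Tset ont x \ {x}))) ∧
    ((∀ x : S, ∃ p : Pairs r, p.val.2 = Fset inj x) ∧
     (∀ p : Pairs r, CMIrr p ↔ ∃ x : S, p.val.2 = Fset inj x) ∧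
     (∀ (x : S) (p q : Pairs r), p.val.2 = Fset inj x →
        (p ⋖ q ↔ q.val.2 = Fset inj x \ {x}))) :=
  ⟨⟨fun x => ⟨h.pairT x, rfl⟩, fun _ => h.cjirr_iff, fun _ _ _ => h.covBy_iff⟩,
    ⟨fun x => ⟨OrderDual.ofDual (Pairs.dualFlip.symm (h.dual.pairT x)), rfl⟩,
      fun _ => h.cmirr_iff, fun _ _ _ => h.covBy_iff_of_snd⟩⟩

end SDL
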